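/- The pullback of two-form-type vector fields is compatible with the cross product of one-form-type pullbacks: if ℰ = Fᵀ e and ℬ = J F⁻¹ b for an invertible F with J = det F, and 𝒱 = −F⁻¹ v, then 𝒱 × ℬ = −Fᵀ (v × b). -/

import Mathlib

open Matrix

theorem crossProduct_mulVec {R : Type*} [CommRing R] (M : Matrix (Fin 3) (Fin 3) R)
    (a c : Fin 3 → R) : (M *ᵥ a) ⨯₃ (M *ᵥ c) = (adjugate M)ᵀ *ᵥ (a ⨯₃ c) := by
  ext i
  fin_cases i <;>
    simp [cross_apply, mulVec, dotProduct, Fin.sum_univ_three, adjugate_fin_three] <;> ring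

theorem transpose_mulVec_crossProduct_mulVec {R : Type*} [CommRing R]
    (M : Matrix (Fin 3) (Fin 3) R) (a c : Fin 3 → R) :
    Mᵀ *ᵥ ((M *ᵥ a) ⨯₃ (M *ᵥ c)) = M.det • (a ⨯₃ c) := by
  rw [crossProduct_mulVec, mulVec_mulVec, ← transpose_mul, adjugate_mul, transpose_smul,
    transpose_one, smul_mulVec, one_mulVec]

theorem stmt_7 (F : Matrix (Fin 3) (Fin 3) ℝ) (hF : IsUnit F.det)
    (v b 𝒱 ℬ : Fin 3 → ℝ)
    (h𝒱 : 𝒱 = -(F⁻¹.mulVec v))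
    (hℬ : ℬ = F.det • F⁻¹.mulVec b) :
    crossProduct 𝒱 ℬ = -(F.transpose.mulVec (crossProduct v b)) := by
  have hcross := transpose_mulVec_crossProduct_mulVec F (F⁻¹ *ᵥ v) (F⁻¹ *ᵥ b)
  simp only [mulVec_mulVec, mul_nonsing_inv _ hF, one_mulVec] at hcross
  rw [h𝒱, hℬ, hcross, map_neg, LinearMap.neg_apply, map_smul]
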